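/- For all 0 < K < B with B > S₀ and all T ≥ 0, the third mixed derivative of the up-and-out call price satisfies ∂³C/∂K²∂B (K,B,T) = D(T) φ(K,B,T). -/

import Mathlib

open MeasureTheory Real Filter

/-- Discount factor `D(T) = exp(-∫₀ᵀ r(u) du)`. -/
noncomputable def disc (r : ℝ → ℝ) (T : ℝ) : ℝ := Real.exp (-(∫ u in (0:ℝ)..T, r u))

/-- Up-and-out call price
`C(K,B,T) = D(T) ∫_{max(K,S₀)}^B ∫_K^y (x-K) φ(x,y,T) dx dy`. -/
noncomputable def upOutCall (S₀ : ℝ) (r : ℝ → ℝ) (φ : ℝ → ℝ → ℝ → ℝ) (K B T : ℝ) : ℝ :=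
  disc r T * ∫ y in (max K S₀)..B, ∫ x in K..y, (x - K) * φ x y T

/-!
Differentiate under the integral sign. Whenever a limit of integration moves with `K`, the
integrand vanishes on the diagonal `y = K` (`(x - K) φ` at `x = K`, then `∫_y^K φ` at `y = K`),
so no boundary terms appear, even at the kink of `max K S₀` at `K = S₀`. Two `K`-derivatives
leave `D(T) ∫_{max(K,S₀)}^B φ(K,y,T) dy`, and the fundamental theorem of calculus in `B`
gives `D(T) φ(K,B,T)`.
-/

open intervalIntegral Set Topology Function Asymptotics

section

variable {E : Type*} [NormedAddCommGroup E] [NormedSpace ℝ E]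

theorem continuous_parametric_intervalIntegral_of_continuous_limits {X : Type*}
    [TopologicalSpace X] {f : X → ℝ → E} (hf : Continuous f.uncurry) {a b : X → ℝ}
    (ha : Continuous a) (hb : Continuous b) :
    Continuous fun x => ∫ t in a x..b x, f x t := by
  have hint : ∀ x u v, IntervalIntegrable (f x) volume u v := fun x u v =>
    (hf.uncurry_left x).intervalIntegrable u v
  have hsplit : (fun x => ∫ t in a x..b x, f x t)
      = fun x => (∫ t in (0 : ℝ)..b x, f x t) - ∫ t in (0 : ℝ)..a x, f x t :=
    funext fun x => (integral_interval_sub_left (hint x 0 _) (hint x 0 _)).symm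
  rw [hsplit]
  exact (continuous_parametric_intervalIntegral_of_continuous hf hb).sub
    (continuous_parametric_intervalIntegral_of_continuous hf ha)

theorem hasDerivAt_intervalIntegral_of_continuous {F F' : ℝ → ℝ → E}
    (hF : Continuous F.uncurry) (hF' : Continuous F'.uncurry)
    (hd : ∀ t y, HasDerivAt (F · y) (F' t y) t) (a b t₀ : ℝ) :
    HasDerivAt (fun t => ∫ y in a..b, F t y) (∫ y in a..b, F' t₀ y) t₀ := by
  obtain ⟨M, hM⟩ :=
    ((isCompact_closedBall t₀ 1).prod isCompact_uIcc).exists_bound_of_continuousOn hF'.continuousOn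
  refine (hasDerivAt_integral_of_dominated_loc_of_deriv_le (bound := fun _ => M)
    (Metric.ball_mem_nhds t₀ one_pos)
    (Eventually.of_forall fun t => (hF.uncurry_left t).aestronglyMeasurable)
    ((hF.uncurry_left t₀).intervalIntegrable _ _) (hF'.uncurry_left t₀).aestronglyMeasurable
    (ae_of_all _ fun y hy t ht => ?_) intervalIntegrable_const
    (ae_of_all _ fun y _ t _ => hd t y)).2
  exact hM (t, y) ⟨Metric.ball_subset_closedBall ht, uIoc_subset_uIcc hy⟩

-- The integrand is small near `(t₀, m t₀)` and the interval has length `O(t - t₀)`.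
theorem hasDerivAt_integral_moving_limit_of_eq_zero {F : ℝ → ℝ → E} {m : ℝ → ℝ}
    {L : NNReal} {t₀ : ℝ} (hm : LipschitzWith L m) (hF : ContinuousAt F.uncurry (t₀, m t₀))
    (h0 : F t₀ (m t₀) = 0) :
    HasDerivAt (fun t => ∫ y in m t₀..m t, F t y) 0 t₀ := by
  rw [hasDerivAt_iff_isLittleO]
  simp only [integral_same, sub_zero, smul_zero]
  refine IsLittleO.trans_isBigO ?_ (IsBigO.of_bound L (Eventually.of_forall fun t => ?_) :
    (fun t => m t - m t₀) =O[𝓝 t₀] fun t => t - t₀)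
  · refine isLittleO_iff.2 fun c hc => ?_
    have hsmall : ∀ᶠ p in 𝓝 (t₀, m t₀), ‖F.uncurry p‖ < c := by
      simpa [h0] using hF.norm.eventually (gt_mem_nhds (by simpa [h0] using hc))
    obtain ⟨δ, hδ, hball⟩ := Metric.eventually_nhds_iff.1 hsmall
    have hmt := hm.continuous.continuousAt.eventually (Metric.ball_mem_nhds (m t₀) hδ)
    filter_upwards [Metric.ball_mem_nhds t₀ hδ, hmt] with t ht hmt
    refine intervalIntegral.norm_integral_le_of_norm_le_const fun y hy => (@hball (t, y) ?_).le
    rw [Prod.dist_eq, max_lt_iff]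
    refine ⟨ht, lt_of_le_of_lt ?_ hmt⟩
    simpa only [Real.dist_eq] using abs_sub_left_of_mem_uIcc (uIoc_subset_uIcc hy)
  · simpa only [Real.norm_eq_abs, ← Real.dist_eq] using hm.dist_le_mul t t₀

theorem hasDerivAt_integral_lipschitz_lower_limit {F F' : ℝ → ℝ → E} {m : ℝ → ℝ}
    {L : NNReal} (hF : Continuous F.uncurry) (hF' : Continuous F'.uncurry)
    (hd : ∀ t y, HasDerivAt (F · y) (F' t y) t) (hm : LipschitzWith L m) {t₀ : ℝ}
    (h0 : F t₀ (m t₀) = 0) (b : ℝ) :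
    HasDerivAt (fun t => ∫ y in m t..b, F t y) (∫ y in m t₀..b, F' t₀ y) t₀ := by
  have hint : ∀ t u v, IntervalIntegrable (F t) volume u v := fun t u v =>
    (hF.uncurry_left t).intervalIntegrable u v
  have hsplit : ∀ t, ∫ y in m t..b, F t y
      = (∫ y in m t₀..b, F t y) - ∫ y in m t₀..m t, F t y :=
    fun t => (integral_interval_sub_left (hint t _ _) (hint t _ _)).symm
  simpa only [sub_zero] using
    ((hasDerivAt_intervalIntegral_of_continuous hF hF' hd (m t₀) b t₀).fun_sub
      (hasDerivAt_integral_moving_limit_of_eq_zero hm hF.continuousAt h0)).congr_of_eventuallyEq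
      (Eventually.of_forall hsplit)

-- Below `c` the lower limit is locally constant; above `c` it is `t` and `F t t = 0`.
theorem hasDerivAt_integral_max_lower_limit {F F' : ℝ → ℝ → E}
    (hF : Continuous F.uncurry) (hF' : Continuous F'.uncurry)
    (hd : ∀ t y, HasDerivAt (F · y) (F' t y) t) (hdiag : ∀ t, F t t = 0) (c b t₀ : ℝ) :
    HasDerivAt (fun t => ∫ y in max t c..b, F t y) (∫ y in max t₀ c..b, F' t₀ y) t₀ := by
  rcases lt_or_ge t₀ c with hlt | hle
  · rw [max_eq_right hlt.le]
    refine (hasDerivAt_intervalIntegral_of_continuous hF hF' hd c b t₀).congr_of_eventuallyEq ?_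
    filter_upwards [eventually_lt_nhds hlt] with t ht
    rw [max_eq_right ht.le]
  · refine hasDerivAt_integral_lipschitz_lower_limit hF hF' hd
      (LipschitzWith.id.max_const c) ?_ b
    rw [id, max_eq_left hle]
    exact hdiag t₀

theorem hasDerivAt_integral_sub_smul {g : ℝ → E} (hg : Continuous g) (y t₀ : ℝ) :
    HasDerivAt (fun t => ∫ x in t..y, (x - t) • g x) (∫ x in y..t₀, g x) t₀ := by
  have h := hasDerivAt_integral_lipschitz_lower_limit (F := fun t x => (x - t) • g x)
    (F' := fun _ x => -g x) (by fun_prop) (by fun_prop)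
    (fun t x => by simpa using ((hasDerivAt_id t).const_sub x).smul_const (g x))
    LipschitzWith.id (by simp) y (t₀ := t₀)
  rwa [intervalIntegral.integral_neg, ← integral_symm] at h

end

theorem stmt_2_general (S₀ : ℝ) (r : ℝ → ℝ)
    (φ : ℝ → ℝ → ℝ → ℝ)
    (hφdiff : ∀ t : ℝ, ContDiff ℝ 1 fun p : ℝ × ℝ => φ p.1 p.2 t) :
    ∀ K B T : ℝ, 0 < K → K < B → S₀ < B → 0 ≤ T →
      deriv (fun B' => deriv (deriv (fun K' => upOutCall S₀ r φ K' B' T)) K) B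
        = disc r T * φ K B T := by
  intro K B T _ _ _ _
  have hf : Continuous (uncurry fun x y => φ x y T) := (hφdiff T).continuous
  have hψ : Continuous (uncurry fun t y => ∫ x in t..y, (x - t) * φ x y T) :=
    continuous_parametric_intervalIntegral_of_continuous_limits (by fun_prop) (by fun_prop)
      (by fun_prop)
  have hχ : Continuous (uncurry fun t y => ∫ x in y..t, φ x y T) :=
    continuous_parametric_intervalIntegral_of_continuous_limits (by fun_prop) (by fun_prop)
      (by fun_prop)
  have hfirst : ∀ B', deriv (fun K' => upOutCall S₀ r φ K' B' T)
      = fun t => disc r T * ∫ y in max t S₀..B', ∫ x in y..t, φ x y T := fun B' =>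
    funext fun t => ((hasDerivAt_integral_max_lower_limit hψ hχ
      (fun t y => by simpa only [smul_eq_mul] using
        hasDerivAt_integral_sub_smul (hf.uncurry_right y) y t)
      (fun _ => integral_same) S₀ B' t).const_mul (disc r T)).deriv
  have hsecond : ∀ B', deriv (deriv (fun K' => upOutCall S₀ r φ K' B' T)) K
      = disc r T * ∫ y in max K S₀..B', φ K y T := fun B' => by
    rw [hfirst B']
    exact ((hasDerivAt_integral_max_lower_limit hχ hf
      (fun t y => ((hf.uncurry_right y).integral_hasStrictDerivAt y t).hasDerivAt)
      (fun _ => integral_same) S₀ B' K).const_mul (disc r T)).deriv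
  simp_rw [hsecond]
  exact (((hf.uncurry_left K).integral_hasStrictDerivAt _ B).hasDerivAt.const_mul _).deriv

/-- For all `0 < K < B` with `B > S₀` and all `T ≥ 0`,
`∂³C/∂K²∂B (K,B,T) = D(T) φ(K,B,T)`. -/
theorem stmt_2 (S₀ : ℝ) (hS₀ : 0 < S₀) (r : ℝ → ℝ) (hr : Continuous r)
    (φ : ℝ → ℝ → ℝ → ℝ)
    (hφdiff : ∀ t : ℝ, ContDiff ℝ 1 fun p : ℝ × ℝ => φ p.1 p.2 t)
    (hφbd : ∀ s : Set (ℝ × ℝ × ℝ), IsCompact s → ∃ M : ℝ, ∀ p ∈ s,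
      |φ p.1 p.2.1 p.2.2| ≤ M ∧ ‖fderiv ℝ (fun q : ℝ × ℝ => φ q.1 q.2 p.2.2) (p.1, p.2.1)‖ ≤ M) :
    ∀ K B T : ℝ, 0 < K → K < B → S₀ < B → 0 ≤ T →
      deriv (fun B' => deriv (deriv (fun K' => upOutCall S₀ r φ K' B' T)) K) B
        = disc r T * φ K B T :=
  stmt_2_general S₀ r φ hφdiff
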